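/- Let F = (p; q_1, …, q_m) be a flower in G and let S be a set consisting of three petals of F. Then S is not a cutset of G; that is, the graph G − S is connected. -/

import Mathlib

namespace Paper

variable {V : Type*}

/-- `S ⊆ V(G)` is a cutset of `G`: the graph `G − S` is disconnected. -/
def IsCutset (G : SimpleGraph V) (S : Set V) : Prop :=
  ¬ (G.induce (Sᶜ : Set V)).Connected

/-- A 3-cutset: a cutset of exactly 3 vertices. -/
def IsThreeCutset (G : SimpleGraph V) (S : Set V) : Prop :=
  S.ncard = 3 ∧ IsCutset G S

/-- `G` is triconnected: at least 4 vertices and deleting any at most 2 vertices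
leaves a connected graph. -/
def IsTriconnected [Fintype V] (G : SimpleGraph V) : Prop :=
  4 ≤ Fintype.card V ∧
    ∀ X : Set V, X.ncard ≤ 2 → (G.induce (Xᶜ : Set V)).Connected

/-- `x` and `y` both survive the deletion of `R` and lie in the same connected
component of `G − R`. -/
def ReachOutside (G : SimpleGraph V) (R : Set V) (x y : V) : Prop :=
  ∃ (hx : x ∈ (Rᶜ : Set V)) (hy : y ∈ (Rᶜ : Set V)),
    (G.induce (Rᶜ : Set V)).Reachable ⟨x, hx⟩ ⟨y, hy⟩

/-- `R` splits `X`: two vertices of `X \ R` lie in different connected components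
of `G − R`. -/
def Splits (G : SimpleGraph V) (R X : Set V) : Prop :=
  ∃ x ∈ X, ∃ y ∈ X, x ∉ R ∧ y ∉ R ∧ ¬ ReachOutside G R x y

/-- Two 3-cutsets are dependent iff one splits the other. -/
def Dependent (G : SimpleGraph V) (S T : Set V) : Prop :=
  Splits G S T ∨ Splits G T S

/-- The connected component of `G − R` containing `u` (empty if `u ∈ R`). -/
def compOutside (G : SimpleGraph V) (R : Set V) (u : V) : Set V :=
  {y | ReachOutside G R u y}

/-- `C` is a connected component of `G − R`. -/
def IsCompOutside (G : SimpleGraph V) (R : Set V) (C : Set V) : Prop :=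
  ∃ u, u ∉ R ∧ C = compOutside G R u

/-- `A` is a part of the decomposition of `G` by the set `𝔖` of cutsets: a
maximal set split by no member of `𝔖`. -/
def IsPart (G : SimpleGraph V) (𝔖 : Set (Set V)) (A : Set V) : Prop :=
  (∀ S ∈ 𝔖, ¬ Splits G S A) ∧
    ∀ B : Set V, A ⊆ B → (∀ S ∈ 𝔖, ¬ Splits G S B) → B = A

/-- The set `𝔖` of 3-cutsets generates the flower `(p; q 0, …, q (m-1))`:
every member of `𝔖` has the form `{q i, q j, p}` with `i`, `j` distinct and
non-neighboring in the cyclic order, and the decomposition of `G` by `𝔖`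
consists of exactly `m` parts `G_{i,i+1}` whose boundaries (the vertices lying
in some member of `𝔖`) are `{q i, q (i+1), p}`. -/
def GeneratesFlower (G : SimpleGraph V) (m : ℕ) (p : V) (q : ZMod m → V)
    (𝔖 : Set (Set V)) : Prop :=
  (∀ S ∈ 𝔖, IsThreeCutset G S ∧
    ∃ i j : ZMod m, j ≠ i ∧ j ≠ i + 1 ∧ i ≠ j + 1 ∧ S = {q i, q j, p}) ∧
  ∃ Gp : ZMod m → Set V, Function.Injective Gp ∧
    (∀ A : Set V, IsPart G 𝔖 A ↔ ∃ i : ZMod m, A = Gp i) ∧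
    (∀ i : ZMod m, Gp i ∩ ⋃₀ 𝔖 = {q i, q (i + 1), p})


/-! Suppose `G − S` is disconnected for `S = {q i, q j, q k}` and let `H` be a component of
`G − S` not containing the center `p`; by triconnectivity every petal of `S` has a neighbour
in `H`. If `H` contains a petal `q a`, then some chord `{q x, q y, p}` with `x, y ∈ {i, j, k}`
has `q a` on one side and the third petal of `S` on the other, yet `H` joins them while
avoiding the chord. Otherwise `H` meets no cutset of `𝔖`, so `H` and its three neighbouring
petals lie in a single part `G_{t,t+1}`, whose only petals are `q t` and `q (t + 1)`. -/

section ReachOutside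

variable {G : SimpleGraph V} {R T : Set V} {x y z p l : V}

lemma ReachOutside.refl (hx : x ∉ R) : ReachOutside G R x x :=
  ⟨hx, hx, .refl _⟩

lemma ReachOutside.symm (h : ReachOutside G R x y) : ReachOutside G R y x :=
  let ⟨hx, hy, hr⟩ := h
  ⟨hy, hx, hr.symm⟩

lemma ReachOutside.trans (hxy : ReachOutside G R x y) (hyz : ReachOutside G R y z) :
    ReachOutside G R x z :=
  let ⟨hx, _, hr⟩ := hxy
  let ⟨_, hz, hr'⟩ := hyz
  ⟨hx, hz, hr.trans hr'⟩

lemma ReachOutside.of_adj (h : G.Adj x y) (hx : x ∉ R) (hy : y ∉ R) : ReachOutside G R x y :=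
  ⟨hx, hy, SimpleGraph.Adj.reachable (by simpa using h)⟩

lemma ReachOutside.adj (hxy : ReachOutside G R x y) (h : G.Adj y z) (hz : z ∉ R) :
    ReachOutside G R x z :=
  hxy.trans (.of_adj h hxy.2.1 hz)

@[elab_as_elim]
lemma ReachOutside.induction {P : V → Prop} (h : ReachOutside G R x y) (hx : P x)
    (step : ∀ u v, ReachOutside G R x u → P u → v ∉ R → G.Adj u v → P v) : P y := by
  obtain ⟨hx', hy', hr⟩ := h
  rw [SimpleGraph.reachable_iff_reflTransGen] at hr
  suffices ∀ w : (Rᶜ : Set V), Relation.ReflTransGen (G.induce Rᶜ).Adj ⟨x, hx'⟩ w →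
      ReachOutside G R x w ∧ P w from (this _ hr).2
  intro w hw
  induction hw with
  | refl => exact ⟨.refl hx', hx⟩
  | @tail u v _ huv ih =>
    have hadj : G.Adj u v := by simpa using huv
    exact ⟨ih.1.adj hadj v.2, step u v ih.1 ih.2 v.2 hadj⟩

lemma ReachOutside.of_forall_not_mem (h : ReachOutside G R x y)
    (hT : ∀ w, ReachOutside G R x w → w ∉ T) : ReachOutside G T x y :=
  h.induction (.refl (hT x (.refl h.1)))
    fun _ v hu hTu hv huv => hTu.adj huv (hT v (hu.adj huv hv))

lemma exists_not_reachOutside_of_not_connected (hp : p ∉ R)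
    (h : ¬ (G.induce Rᶜ).Connected) : ∃ z ∉ R, ¬ ReachOutside G R z p := by
  contrapose! h
  refine (SimpleGraph.connected_iff_exists_forall_reachable _).2 ⟨⟨p, hp⟩, fun w => ?_⟩
  exact (h w w.2).2.2.symm

lemma IsTriconnected.exists_adj_reachOutside [Fintype V] (hG : IsTriconnected G)
    (hR : R.ncard ≤ 3) (hl : l ∈ R) (hz : z ∉ R) (hp : p ∉ R)
    (hzp : ¬ ReachOutside G R z p) : ∃ h, ReachOutside G R z h ∧ G.Adj l h := by
  by_contra! hno
  have hcard : (R \ {l}).ncard ≤ 2 := by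
    rw [Set.ncard_sdiff_singleton_of_mem hl]; omega
  have hconn := hG.2 _ hcard
  have hzp' : ReachOutside G (R \ {l}) z p :=
    ⟨fun h => hz h.1, fun h => hp h.1, hconn.preconnected _ _⟩
  -- a path from z to p avoiding R \ {l} must enter l from the component of z
  refine hzp (hzp'.induction (.refl hz) fun u v _ hu hv huv => ?_)
  by_cases hvl : v = l
  · exact absurd (hvl ▸ huv.symm) (hno u hu)
  · exact hu.adj huv fun hvR => hv ⟨hvR, hvl⟩

end ReachOutside

section Decomposition

variable {G : SimpleGraph V} {𝔖 : Set (Set V)} {A B : Set V} {u v : V}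

lemma not_splits_iff {R X : Set V} :
    ¬ Splits G R X ↔ ∀ x ∈ X, ∀ y ∈ X, x ∉ R → y ∉ R → ReachOutside G R x y := by
  simp [Splits]

lemma exists_isPart_superset [Finite V] (hA : ∀ κ ∈ 𝔖, ¬ Splits G κ A) :
    ∃ B, IsPart G 𝔖 B ∧ A ⊆ B := by
  obtain ⟨B, hB, hmax⟩ := Set.Finite.exists_maximalFor id
    {B | A ⊆ B ∧ ∀ κ ∈ 𝔖, ¬ Splits G κ B} (Set.toFinite _) ⟨A, subset_rfl, hA⟩
  exact ⟨B, ⟨hB.2, fun C hBC hC => (hmax ⟨hB.1.trans hBC, hC⟩ hBC).antisymm hBC⟩, hB.1⟩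

lemma exists_isPart_mem_of_adj [Finite V] (h : G.Adj u v) :
    ∃ A, IsPart G 𝔖 A ∧ u ∈ A ∧ v ∈ A := by
  have hreach : ∀ x ∈ ({u, v} : Set V), ∀ y ∈ ({u, v} : Set V), ∀ κ : Set V,
      x ∉ κ → y ∉ κ → ReachOutside G κ x y := by
    simp only [Set.mem_insert_iff, Set.mem_singleton_iff]
    rintro x (rfl | rfl) y (rfl | rfl) κ hx hy
    exacts [.refl hx, .of_adj h hx hy, .of_adj h.symm hx hy, .refl hx]
  obtain ⟨A, hA, hsub⟩ := exists_isPart_superset (G := G) (𝔖 := 𝔖) (A := {u, v})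
    fun κ _ => not_splits_iff.2 fun x hx y hy => hreach x hx y hy κ
  exact ⟨A, hA, hsub (by simp), hsub (by simp)⟩

lemma exists_isPart_mem [Finite V] (v : V) : ∃ A, IsPart G 𝔖 A ∧ v ∈ A := by
  obtain ⟨A, hA, hsub⟩ := exists_isPart_superset (G := G) (𝔖 := 𝔖) (A := {v})
    fun κ _ => not_splits_iff.2 fun x hx y hy hxκ _ => by
      rw [Set.mem_singleton_iff] at hx hy
      subst hx hy
      exact .refl hxκ
  exact ⟨A, hA, hsub rfl⟩

lemma IsPart.eq_of_mem (hA : IsPart G 𝔖 A) (hB : IsPart G 𝔖 B) (hvA : v ∈ A) (hvB : v ∈ B)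
    (hv : v ∉ ⋃₀ 𝔖) : A = B := by
  have hunion : ∀ κ ∈ 𝔖, ¬ Splits G κ (A ∪ B) := by
    intro κ hκ
    have hvκ : v ∉ κ := fun h => hv ⟨κ, hκ, h⟩
    have toV : ∀ x ∈ A ∪ B, x ∉ κ → ReachOutside G κ x v := by
      rintro x (hx | hx) hxκ
      · exact not_splits_iff.1 (hA.1 κ hκ) x hx v hvA hxκ hvκ
      · exact not_splits_iff.1 (hB.1 κ hκ) x hx v hvB hxκ hvκ
    exact not_splits_iff.2 fun x hx y hy hxκ hyκ => (toV x hx hxκ).trans (toV y hy hyκ).symm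
  calc A = A ∪ B := (hA.2 _ Set.subset_union_left hunion).symm
    _ = B := hB.2 _ Set.subset_union_right hunion

lemma IsPart.mem_of_adj [Finite V] (hA : IsPart G 𝔖 A) (hvA : v ∈ A) (hv : v ∉ ⋃₀ 𝔖)
    (h : G.Adj v u) : u ∈ A := by
  obtain ⟨B, hB, hvB, huB⟩ := exists_isPart_mem_of_adj (𝔖 := 𝔖) h
  exact hA.eq_of_mem hB hvA hvB hv ▸ huB

lemma exists_isPart_superset_reachOutside [Finite V] {R : Set V} {z : V}
    (hH : ∀ w, ReachOutside G R z w → w ∉ ⋃₀ 𝔖) :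
    ∃ A, IsPart G 𝔖 A ∧ {w | ReachOutside G R z w} ⊆ A := by
  refine exists_isPart_superset fun κ hκ => not_splits_iff.2 fun x hx y hy _ _ => ?_
  have hzx : ReachOutside G R z x := hx
  exact (hzx.symm.trans hy).of_forall_not_mem fun w hw hwκ => hH w (hzx.trans hw) ⟨κ, hκ, hwκ⟩

end Decomposition

lemma _root_.ZMod.val_sub_one_of_ne_zero {m : ℕ} [NeZero m] {c : ZMod m} (hc : c ≠ 0) :
    (c - 1).val = c.val - 1 := by
  have h1 : 1 ≤ c.val := Nat.pos_of_ne_zero ((ZMod.val_ne_zero c).2 hc)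
  have hcast : ((c.val - 1 : ℕ) : ZMod m) = c - 1 := by
    rw [Nat.cast_sub h1, ZMod.natCast_zmod_val, Nat.cast_one]
  rw [← hcast, ZMod.val_cast_of_lt (by have := c.val_lt; omega)]

lemma _root_.ZMod.val_sub_eq_sub_val_sub {m : ℕ} [NeZero m] {a u x : ZMod m}
    (h : (u - a).val < (x - a).val) : (u - x).val = m - ((x - a).val - (u - a).val) := by
  have hxu : (x - u).val = (x - a).val - (u - a).val := by
    rw [← ZMod.val_sub h.le, sub_sub_sub_cancel_right]
  have hne : x - u ≠ 0 := by
    rw [← ZMod.val_ne_zero, hxu]; omega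
  rw [← neg_sub, ZMod.neg_val, if_neg hne, hxu]

section Arc

variable {m : ℕ} [NeZero m] {x y : ZMod m}

/-- `t` lies on the half-open arc `[x, y)` of the cycle `ZMod m`, traversed upwards from `x`. -/
def InArc (x y t : ZMod m) : Prop := (t - x).val < (y - x).val

lemma InArc.add_one_eq {t : ZMod m} (ht : InArc x y t) (ht' : ¬ InArc x y (t + 1)) :
    t + 1 = y := by
  unfold InArc at *
  have hne : t + 1 - x ≠ 0 := fun h => ht' (by rw [h, ZMod.val_zero]; omega)
  have hval := ZMod.val_sub_one_of_ne_zero hne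
  rw [show t + 1 - x - 1 = t - x by ring] at hval
  have : (t + 1 - x).val = (y - x).val := by omega
  simpa using ZMod.val_injective m this

lemma add_one_eq_of_not_inArc {r : ZMod m} (hr : ¬ InArc x y r) (hr' : InArc x y (r + 1)) :
    r + 1 = x := by
  unfold InArc at *
  by_contra hne
  have hval := ZMod.val_sub_one_of_ne_zero (sub_ne_zero.2 hne)
  rw [show r + 1 - x - 1 = r - x by ring] at hval
  omega

lemma inArc_of_lt_of_lt {a w : ZMod m} (hy : 0 < (y - a).val) (hyw : (y - a).val < (w - a).val)
    (hwx : (w - a).val < (x - a).val) : InArc x y a ∧ ¬ InArc x y w := by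
  have hax := ZMod.val_sub_eq_sub_val_sub (a := a) (u := a) (x := x)
    (by rw [sub_self, ZMod.val_zero]; omega)
  have hyx := ZMod.val_sub_eq_sub_val_sub (hyw.trans hwx)
  have hwx' := ZMod.val_sub_eq_sub_val_sub hwx
  have := (x - a).val_lt
  simp only [sub_self, ZMod.val_zero, Nat.sub_zero] at hax
  unfold InArc
  omega

lemma exists_chord_separating {a i j k : ZMod m} (hai : a ≠ i) (haj : a ≠ j) (hak : a ≠ k)
    (hij : i ≠ j) (hik : i ≠ k) (hjk : j ≠ k) :
    ∃ x ∈ ({i, j, k} : Set (ZMod m)), ∃ y ∈ ({i, j, k} : Set (ZMod m)),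
      ∃ c ∈ ({i, j, k} : Set (ZMod m)), c ≠ x ∧ c ≠ y ∧ InArc x y a ∧ ¬ InArc x y c := by
  set d : ZMod m → ℕ := fun b => (b - a).val
  have hd : ∀ b c, b ≠ c → d b ≠ d c := fun b c hbc h =>
    hbc (sub_left_injective (ZMod.val_injective m h))
  have hpos : ∀ b, a ≠ b → 0 < d b := fun b hab =>
    (ZMod.val_pos).2 (sub_ne_zero.2 hab.symm)
  -- ordering `i, j, k` by their distance `d` from `a`, the farthest and the nearest form the chord
  have sorted : ∀ x y c, a ≠ y → d y < d c → d c < d x →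
      c ≠ x ∧ c ≠ y ∧ InArc x y a ∧ ¬ InArc x y c := fun x y c hay hyc hcx =>
    ⟨by rintro rfl; omega, by rintro rfl; omega, inArc_of_lt_of_lt (hpos y hay) hyc hcx⟩
  rcases (hd i j hij).lt_or_gt with h1 | h1 <;> rcases (hd j k hjk).lt_or_gt with h2 | h2 <;>
    rcases (hd i k hik).lt_or_gt with h3 | h3
  all_goals first
    | omega
    | exact ⟨k, by simp, i, by simp, j, by simp, sorted k i j hai h1 h2⟩
    | exact ⟨j, by simp, i, by simp, k, by simp, sorted j i k hai h3 h2⟩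
    | exact ⟨j, by simp, k, by simp, i, by simp, sorted j k i hak h3 h1⟩
    | exact ⟨i, by simp, k, by simp, j, by simp, sorted i k j hak h2 h1⟩
    | exact ⟨k, by simp, j, by simp, i, by simp, sorted k j i haj h1 h3⟩
    | exact ⟨i, by simp, j, by simp, k, by simp, sorted i j k haj h2 h3⟩

end Arc

/-- `Gp t` is the part `G_{t,t+1}` of the flower. -/
structure FlowerParts (G : SimpleGraph V) (m : ℕ) (p : V) (q : ZMod m → V)
    (𝔖 : Set (Set V)) (Gp : ZMod m → Set V) : Prop where
  injective : Function.Injective Gp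
  isPart_iff : ∀ A, IsPart G 𝔖 A ↔ ∃ t, A = Gp t
  inter_sUnion : ∀ t, Gp t ∩ ⋃₀ 𝔖 = {q t, q (t + 1), p}

namespace FlowerParts

variable {G : SimpleGraph V} {m : ℕ} {p : V} {q : ZMod m → V} {𝔖 : Set (Set V)}
  {Gp : ZMod m → Set V}

lemma isPart (hF : FlowerParts G m p q 𝔖 Gp) (t : ZMod m) : IsPart G 𝔖 (Gp t) :=
  (hF.isPart_iff _).2 ⟨t, rfl⟩

lemma petal_mem_inter (hF : FlowerParts G m p q 𝔖 Gp) (t : ZMod m) :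
    q t ∈ Gp t ∩ ⋃₀ 𝔖 := by
  rw [hF.inter_sUnion]
  exact Set.mem_insert _ _

lemma eq_or_eq_add_one_of_mem (hF : FlowerParts G m p q 𝔖 Gp) (hq : Function.Injective q)
    (hqp : ∀ i, q i ≠ p) {b t : ZMod m} (h : q b ∈ Gp t) : b = t ∨ b = t + 1 := by
  have hb : q b ∈ Gp t ∩ ⋃₀ 𝔖 := ⟨h, (hF.petal_mem_inter b).2⟩
  rw [hF.inter_sUnion] at hb
  rcases hb with hb | hb | hb
  exacts [.inl (hq hb), .inr (hq hb), (hqp b hb).elim]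

lemma eq_or_exists_of_mem_sUnion [Finite V] (hF : FlowerParts G m p q 𝔖 Gp) {v : V}
    (hv : v ∈ ⋃₀ 𝔖) : v = p ∨ ∃ b, v = q b := by
  obtain ⟨A, hA, hvA⟩ := exists_isPart_mem (G := G) (𝔖 := 𝔖) v
  obtain ⟨t, rfl⟩ := (hF.isPart_iff A).1 hA
  have hv' : v ∈ Gp t ∩ ⋃₀ 𝔖 := ⟨hvA, hv⟩
  rw [hF.inter_sUnion] at hv'
  rcases hv' with hv' | hv' | hv'
  exacts [.inr ⟨_, hv'⟩, .inr ⟨_, hv'⟩, .inl hv']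

lemma mem_sUnion_of_mem_of_ne (hF : FlowerParts G m p q 𝔖 Gp) {v : V} {t s : ZMod m}
    (hvt : v ∈ Gp t) (hvs : v ∈ Gp s) (hts : t ≠ s) : v ∈ ⋃₀ 𝔖 := by
  by_contra hv
  exact hts (hF.injective ((hF.isPart t).eq_of_mem (hF.isPart s) hvt hvs hv))

lemma not_reachOutside_chord [Finite V] [NeZero m] (hF : FlowerParts G m p q 𝔖 Gp)
    (hq : Function.Injective q) (hqp : ∀ i, q i ≠ p) {x y b c : ZMod m} (hb : InArc x y b)
    (hc : ¬ InArc x y c) (hcy : c ≠ y) : ¬ ReachOutside G {q x, q y, p} (q b) (q c) := by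
  intro h
  have side : ∀ v, ReachOutside G {q x, q y, p} (q b) v → ∃ t, InArc x y t ∧ v ∈ Gp t := by
    refine fun v hv => hv.induction ⟨b, hb, (hF.petal_mem_inter b).1⟩ ?_
    rintro u v hu ⟨t, ht, hut⟩ - huv
    obtain ⟨A, hA, huA, hvA⟩ := exists_isPart_mem_of_adj (𝔖 := 𝔖) huv
    obtain ⟨r, rfl⟩ := (hF.isPart_iff A).1 hA
    by_cases hr : InArc x y r
    · exact ⟨r, hr, hvA⟩
    -- `u` lies in parts on both sides of the chord, hence is the petal `q x` or `q y`
    exfalso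
    have htr : t ≠ r := by rintro rfl; exact hr ht
    have huQ : u ∉ ({q x, q y, p} : Set V) := hu.2.1
    obtain ⟨β, rfl⟩ : ∃ β, u = q β :=
      (hF.eq_or_exists_of_mem_sUnion (hF.mem_sUnion_of_mem_of_ne hut huA htr)).resolve_left
        fun hup => huQ (by simp [hup])
    rcases hF.eq_or_eq_add_one_of_mem hq hqp hut with rfl | rfl <;>
      rcases hF.eq_or_eq_add_one_of_mem hq hqp huA with h | h
    · exact htr h
    · exact huQ (by simp [h, add_one_eq_of_not_inArc hr (h ▸ ht)])
    · exact huQ (by simp [ht.add_one_eq (h ▸ hr)])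
    · exact htr (add_right_cancel h)
  obtain ⟨t, ht, hct⟩ := side _ h
  rcases hF.eq_or_eq_add_one_of_mem hq hqp hct with rfl | rfl
  exacts [hc ht, hcy (ht.add_one_eq hc)]

section ThreePetals

variable [Finite V] {z : V} {i j k : ZMod m}

lemma not_reachOutside_petal [NeZero m] (hF : FlowerParts G m p q 𝔖 Gp)
    (hq : Function.Injective q) (hqp : ∀ i, q i ≠ p) (hij : i ≠ j) (hik : i ≠ k) (hjk : j ≠ k)
    (hzp : ¬ ReachOutside G (q '' {i, j, k}) z p)
    (hnbr : ∀ c ∈ ({i, j, k} : Set (ZMod m)),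
      ∃ h, ReachOutside G (q '' {i, j, k}) z h ∧ G.Adj (q c) h)
    (a : ZMod m) : ¬ ReachOutside G (q '' {i, j, k}) z (q a) := by
  intro ha
  have haT : a ∉ ({i, j, k} : Set (ZMod m)) := fun h => ha.2.1 ⟨a, h, rfl⟩
  simp only [Set.mem_insert_iff, Set.mem_singleton_iff, not_or] at haT
  obtain ⟨x, hx, y, hy, c, hc, hcx, hcy, hax, hcxy⟩ :=
    exists_chord_separating haT.1 haT.2.1 haT.2.2 hij hik hjk
  obtain ⟨h, hzh, hch⟩ := hnbr c hc
  have hchord :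
      ∀ w, ReachOutside G (q '' {i, j, k}) (q a) w → w ∉ ({q x, q y, p} : Set V) := by
    rintro w hw (rfl | rfl | rfl)
    exacts [hw.2.1 ⟨x, hx, rfl⟩, hw.2.1 ⟨y, hy, rfl⟩, hzp (ha.trans hw)]
  have hcQ : q c ∉ ({q x, q y, p} : Set V) := by
    simp [hq.ne hcx, hq.ne hcy, hqp c]
  exact hF.not_reachOutside_chord hq hqp hax hcxy hcy
    (((ha.symm.trans hzh).of_forall_not_mem hchord).adj hch.symm hcQ)

lemma exists_reachOutside_petal (hF : FlowerParts G m p q 𝔖 Gp)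
    (hq : Function.Injective q) (hqp : ∀ i, q i ≠ p) (hij : i ≠ j) (hik : i ≠ k) (hjk : j ≠ k)
    (hzp : ¬ ReachOutside G (q '' {i, j, k}) z p)
    (hnbr : ∀ c ∈ ({i, j, k} : Set (ZMod m)),
      ∃ h, ReachOutside G (q '' {i, j, k}) z h ∧ G.Adj (q c) h) :
    ∃ a, ReachOutside G (q '' {i, j, k}) z (q a) := by
  by_contra! hpet
  have hH : ∀ w, ReachOutside G (q '' {i, j, k}) z w → w ∉ ⋃₀ 𝔖 := fun w hw hw𝔖 => by
    rcases hF.eq_or_exists_of_mem_sUnion hw𝔖 with rfl | ⟨b, rfl⟩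
    exacts [hzp hw, hpet b hw]
  obtain ⟨A, hA, hsub⟩ := exists_isPart_superset_reachOutside hH
  obtain ⟨t, rfl⟩ := (hF.isPart_iff A).1 hA
  have hT : ∀ c ∈ ({i, j, k} : Set (ZMod m)), c = t ∨ c = t + 1 := fun c hc => by
    obtain ⟨h, hzh, hch⟩ := hnbr c hc
    exact hF.eq_or_eq_add_one_of_mem hq hqp (hA.mem_of_adj (hsub hzh) (hH h hzh) hch.symm)
  rcases hT i (by simp) with rfl | rfl <;> rcases hT j (by simp) with rfl | rfl <;>
    rcases hT k (by simp) with h | h <;> simp_all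

end ThreePetals

end FlowerParts

theorem stmt_19_general [Fintype V] (G : SimpleGraph V)
    (htri : IsTriconnected G)
    (m : ℕ) (hm : 4 ≤ m) (p : V) (q : ZMod m → V)
    (hq : Function.Injective q) (hqp : ∀ i : ZMod m, q i ≠ p)
    (𝔖 : Set (Set V))
    (hgen : GeneratesFlower G m p q 𝔖)
    (i j k : ZMod m) (hij : i ≠ j) (hik : i ≠ k) (hjk : j ≠ k) :
    (G.induce (({q i, q j, q k} : Set V)ᶜ)).Connected := by
  have : NeZero m := ⟨by omega⟩
  obtain ⟨-, Gp, hinj, hparts, hbd⟩ := hgen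
  have hF : FlowerParts G m p q 𝔖 Gp := ⟨hinj, hparts, hbd⟩
  have hpR : p ∉ q '' {i, j, k} := fun ⟨_, _, h⟩ => hqp _ h
  have hcard : (q '' {i, j, k}).ncard ≤ 3 :=
    (Set.ncard_image_le (Set.toFinite _)).trans
      (Set.ncard_eq_three.2 ⟨i, j, k, hij, hik, hjk, rfl⟩).le
  rw [show ({q i, q j, q k} : Set V) = q '' {i, j, k} by simp [Set.image_insert_eq]]
  by_contra hcon
  obtain ⟨z, hz, hzp⟩ := exists_not_reachOutside_of_not_connected hpR hcon
  have hnbr := fun c (hc : c ∈ ({i, j, k} : Set (ZMod m))) =>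
    htri.exists_adj_reachOutside hcard ⟨c, hc, rfl⟩ hz hpR hzp
  obtain ⟨a, ha⟩ := hF.exists_reachOutside_petal hq hqp hij hik hjk hzp hnbr
  exact hF.not_reachOutside_petal hq hqp hij hik hjk hzp hnbr a ha

/-- Lemma `lor12`: a set of three petals of a flower is not a cutset, i.e.
deleting three petals leaves a connected graph. -/
theorem stmt_19 [Fintype V] (G : SimpleGraph V)
    (htri : IsTriconnected G) (hbig : 6 < Fintype.card V)
    (m : ℕ) (hm : 4 ≤ m) (p : V) (q : ZMod m → V)
    (hq : Function.Injective q) (hqp : ∀ i : ZMod m, q i ≠ p)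
    (𝔖 : Set (Set V)) (h𝔖ne : 𝔖.Nonempty)
    (hgen : GeneratesFlower G m p q 𝔖)
    (i j k : ZMod m) (hij : i ≠ j) (hik : i ≠ k) (hjk : j ≠ k) :
    (G.induce (({q i, q j, q k} : Set V)ᶜ)).Connected :=
  stmt_19_general G htri m hm p q hq hqp 𝔖 hgen i j k hij hik hjk

end Paper
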